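/- Let W, W̃ ∈ ℂ^{n×n}. (1) If W̃ is a complex c-approximation of W for some finite c > 0, then every vector v with Wv = v satisfies W̃v = v; if moreover c < 1, then Wv = v holds if and only if W̃v = v. (2) If W̃ is a unit-circle c-approximation of W for some finite c > 0, then for every λ ∈ ℂ with |λ| = 1, every vector v with Wv = λv satisfies W̃v = λv; if moreover c < 1, then Wv = λv holds if and only if W̃v = λv. -/

import Mathlib

/-!
Test the approximation inequality on the pair `(t • u, v)` and let `t → 0⁺`. If the gap term
of `v` vanishes, i.e. `φ (v* W v) = ‖v‖²` (with `φ = re` for complex and `φ = ‖·‖` for unit-circle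
approximation), which is the case when `W v = μ v` with `φ μ = 1`, then the right-hand side is
`O(t²)` because `φ` is 1-Lipschitz, while the left-hand side is `t |u* (W - W̃) v|`; hence
`(W - W̃) v = 0`. Conversely, if `W̃ v = μ v`, testing on `(v, v)` bounds `z = v* W v - μ ‖v‖²` by
`|z| ≤ c (‖v‖² - φ (v* W v)) ≤ c |z|`, so `z = 0` once `c < 1`, and the first argument applies.
-/

open Matrix

noncomputable section

/-- The sesquilinear form `x* A y`. -/
def sesq {m : Type*} [Fintype m] (A : Matrix m m ℂ) (x y : m → ℂ) : ℂ :=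
  star x ⬝ᵥ (A *ᵥ y)

/-- The squared Euclidean norm of a complex vector. -/
def vnormSq {m : Type*} [Fintype m] (x : m → ℂ) : ℝ :=
  ∑ i, Complex.normSq (x i)

/-- `W̃` is a *complex ε-approximation* of `W`. -/
def ComplexApprox {m : Type*} [Fintype m] (ε : ℝ) (W Wt : Matrix m m ℂ) : Prop :=
  ∀ x y : m → ℂ,
    ‖sesq (W - Wt) x y‖ ≤
      ε / 2 * (vnormSq x + vnormSq y - (sesq W x x + sesq W y y).re)

/-- `W̃` is a *unit-circle ε-approximation* of `W`. -/
def UnitCircleApprox {m : Type*} [Fintype m] (ε : ℝ) (W Wt : Matrix m m ℂ) : Prop :=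
  ∀ x y : m → ℂ,
    ‖sesq (W - Wt) x y‖ ≤
      ε / 2 * (vnormSq x + vnormSq y - ‖sesq W x x + sesq W y y‖)

open Filter Topology

lemma nonpos_of_forall_pos_mul_le_sq_mul {a K : ℝ} (h : ∀ t > 0, t * a ≤ t ^ 2 * K) : a ≤ 0 := by
  have hlim : Tendsto (fun t : ℝ => t * K) (𝓝[>] 0) (𝓝 0) :=
    ((continuous_mul_const K).tendsto' 0 0 (zero_mul K)).mono_left nhdsWithin_le_nhds
  refine ge_of_tendsto hlim (eventually_nhdsWithin_of_forall fun t ht => ?_)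
  exact le_of_mul_le_mul_left (by simpa [sq, mul_assoc] using h t ht) ht

section Sesq

open scoped ComplexOrder

variable {m : Type*} [Fintype m]

lemma sesq_sub_left (A B : Matrix m m ℂ) (x y : m → ℂ) :
    sesq (A - B) x y = sesq A x y - sesq B x y := by
  simp [sesq, sub_mulVec, dotProduct_sub]

lemma sesq_ofReal_smul_left (A : Matrix m m ℂ) (t : ℝ) (x y : m → ℂ) :
    sesq A ((t : ℂ) • x) y = t * sesq A x y := by
  simp [sesq, star_smul, smul_dotProduct]

lemma sesq_ofReal_smul_right (A : Matrix m m ℂ) (t : ℝ) (x y : m → ℂ) :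
    sesq A x ((t : ℂ) • y) = t * sesq A x y := by
  simp [sesq, mulVec_smul, dotProduct_smul]

lemma vnormSq_ofReal_smul (t : ℝ) (x : m → ℂ) : vnormSq ((t : ℂ) • x) = t ^ 2 * vnormSq x := by
  simp [vnormSq, Complex.normSq_mul, Finset.mul_sum, sq]

lemma vnormSq_nonneg (v : m → ℂ) : 0 ≤ vnormSq v :=
  Finset.sum_nonneg fun i _ => Complex.normSq_nonneg (v i)

lemma star_dotProduct_self_eq_vnormSq (v : m → ℂ) : star v ⬝ᵥ v = vnormSq v := by
  simp only [dotProduct, vnormSq, Pi.star_apply, Complex.ofReal_sum]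
  refine Finset.sum_congr rfl fun i _ => ?_
  rw [mul_comm, RCLike.star_def, Complex.mul_conj]

lemma sesq_self_of_mulVec_eq_smul {A : Matrix m m ℂ} {v : m → ℂ} {μ : ℂ} (h : A *ᵥ v = μ • v) :
    sesq A v v = μ * vnormSq v := by
  rw [sesq, h, dotProduct_smul, star_dotProduct_self_eq_vnormSq, smul_eq_mul]

lemma mulVec_eq_of_forall_sesq_sub_eq_zero {A B : Matrix m m ℂ} {v : m → ℂ}
    (h : ∀ u, sesq (A - B) u v = 0) : A *ᵥ v = B *ᵥ v := by
  rw [← sub_eq_zero, ← sub_mulVec, ← dotProduct_star_self_eq_zero]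
  exact h _

end Sesq

section GapApproximation

variable {m : Type*} [Fintype m]

def GapApprox (φ : ℂ → ℝ) (ε : ℝ) (W Wt : Matrix m m ℂ) : Prop :=
  ∀ x y : m → ℂ,
    ‖sesq (W - Wt) x y‖ ≤ ε / 2 * (vnormSq x + vnormSq y - φ (sesq W x x + sesq W y y))

variable {φ : ℂ → ℝ} {c : ℝ} {W Wt : Matrix m m ℂ} {μ : ℂ} {v : m → ℂ}

lemma apply_mul_vnormSq_of_homogeneous (hhom : ∀ (r : ℝ) (a : ℂ), 0 ≤ r → φ (r * a) = r * φ a)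
    (hμ : φ μ = 1) (v : m → ℂ) : φ (μ * vnormSq v) = vnormSq v := by
  rw [mul_comm, hhom _ _ (vnormSq_nonneg v), hμ, mul_one]

namespace GapApprox

theorem mulVec_eq (hφ : LipschitzWith 1 φ) (h : GapApprox φ c W Wt)
    (hv : φ (sesq W v v) = vnormSq v) : W *ᵥ v = Wt *ᵥ v := by
  refine mulVec_eq_of_forall_sesq_sub_eq_zero fun u =>
    norm_eq_zero.1 <| le_antisymm ?_ (norm_nonneg _)
  set s := sesq W u u
  refine nonpos_of_forall_pos_mul_le_sq_mul (K := |c| / 2 * (vnormSq u + ‖s‖)) fun t ht => ?_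
  have hgap : |t ^ 2 * vnormSq u + vnormSq v - φ ((t : ℂ) ^ 2 * s + sesq W v v)|
      ≤ t ^ 2 * (vnormSq u + ‖s‖) := by
    have hlip : |φ ((t : ℂ) ^ 2 * s + sesq W v v) - vnormSq v| ≤ t ^ 2 * ‖s‖ := by
      have := hφ.norm_sub_le ((t : ℂ) ^ 2 * s + sesq W v v) (sesq W v v)
      rwa [hv, NNReal.coe_one, one_mul, add_sub_cancel_right, norm_mul, norm_pow, Complex.norm_real,
        Real.norm_eq_abs, Real.norm_eq_abs, sq_abs] at this
    have hu : 0 ≤ t ^ 2 * vnormSq u := by have := vnormSq_nonneg u; positivity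
    rw [abs_le] at hlip ⊢
    constructor <;> linarith
  calc t * ‖sesq (W - Wt) u v‖ = ‖sesq (W - Wt) ((t : ℂ) • u) v‖ := by
        rw [sesq_ofReal_smul_left, norm_mul, Complex.norm_real, Real.norm_of_nonneg ht.le]
    _ ≤ c / 2 * (t ^ 2 * vnormSq u + vnormSq v - φ ((t : ℂ) ^ 2 * s + sesq W v v)) := by
        convert h ((t : ℂ) • u) v using 4
        · rw [vnormSq_ofReal_smul]
        · rw [sesq_ofReal_smul_left, sesq_ofReal_smul_right]; ring
    _ ≤ |c| / 2 * |t ^ 2 * vnormSq u + vnormSq v - φ ((t : ℂ) ^ 2 * s + sesq W v v)| :=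
        (le_abs_self _).trans_eq (by rw [abs_mul, abs_div, abs_two])
    _ ≤ t ^ 2 * (|c| / 2 * (vnormSq u + ‖s‖)) := by
        rw [mul_left_comm]; gcongr

theorem sesq_self_eq_of_mulVec_eq_smul (hφ : LipschitzWith 1 φ)
    (hhom : ∀ (r : ℝ) (a : ℂ), 0 ≤ r → φ (r * a) = r * φ a) (hμ : φ μ = 1)
    (hc : 0 ≤ c) (hc1 : c < 1) (h : GapApprox φ c W Wt) (hWt : Wt *ᵥ v = μ • v) :
    sesq W v v = μ * vnormSq v := by
  set s := sesq W v v
  set z := s - μ * vnormSq v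
  have hz : ‖z‖ ≤ c * ‖z‖ :=
    calc ‖z‖ = ‖sesq (W - Wt) v v‖ := by rw [sesq_sub_left, sesq_self_of_mulVec_eq_smul hWt]
      _ ≤ c / 2 * (vnormSq v + vnormSq v - φ (s + s)) := h v v
      _ = c * (φ (μ * vnormSq v) - φ s) := by
          rw [← two_mul s, ← two_mul (vnormSq v), show (2 : ℂ) = ((2 : ℝ) : ℂ) by norm_num,
            hhom 2 s two_pos.le, apply_mul_vnormSq_of_homogeneous hhom hμ]
          ring
      _ ≤ c * ‖z‖ := by
          gcongr
          have hlip := hφ.norm_sub_le s (μ * vnormSq v)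
          rw [NNReal.coe_one, one_mul, Real.norm_eq_abs] at hlip
          linarith [neg_abs_le (φ s - φ (μ * vnormSq v))]
  have : ‖z‖ = 0 := by nlinarith [norm_nonneg z]
  exact sub_eq_zero.1 (norm_eq_zero.1 this)

theorem mulVec_eq_smul_of_mulVec_eq_smul (hφ : LipschitzWith 1 φ)
    (hhom : ∀ (r : ℝ) (a : ℂ), 0 ≤ r → φ (r * a) = r * φ a) (hμ : φ μ = 1)
    (h : GapApprox φ c W Wt) (hW : W *ᵥ v = μ • v) : Wt *ᵥ v = μ • v := by
  rw [← h.mulVec_eq hφ (by rw [sesq_self_of_mulVec_eq_smul hW,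
    apply_mul_vnormSq_of_homogeneous hhom hμ]), hW]

theorem mulVec_eq_smul_iff (hφ : LipschitzWith 1 φ)
    (hhom : ∀ (r : ℝ) (a : ℂ), 0 ≤ r → φ (r * a) = r * φ a) (hμ : φ μ = 1)
    (hc : 0 ≤ c) (hc1 : c < 1) (h : GapApprox φ c W Wt) :
    W *ᵥ v = μ • v ↔ Wt *ᵥ v = μ • v := by
  refine ⟨h.mulVec_eq_smul_of_mulVec_eq_smul hφ hhom hμ, fun hWt => ?_⟩
  rw [h.mulVec_eq hφ (by rw [h.sesq_self_eq_of_mulVec_eq_smul hφ hhom hμ hc hc1 hWt,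
    apply_mul_vnormSq_of_homogeneous hhom hμ]), hWt]

end GapApprox

theorem complexApprox_iff_gapApprox {ε : ℝ} :
    ComplexApprox ε W Wt ↔ GapApprox Complex.re ε W Wt := Iff.rfl

theorem unitCircleApprox_iff_gapApprox {ε : ℝ} :
    UnitCircleApprox ε W Wt ↔ GapApprox (‖·‖) ε W Wt := Iff.rfl

end GapApproximation

/-- (1) If `W̃ ≈_c W` (complex approximation) for finite `c > 0`,
then every `v` with `Wv = v` satisfies `W̃v = v`; if moreover `c < 1` then
`Wv = v ↔ W̃v = v`.  (2) If `W̃ ∘≈_c W` (unit-circle approximation) for finite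
`c > 0`, then for every `λ` with `|λ| = 1`, every `v` with `Wv = λv` satisfies
`W̃v = λv`; if moreover `c < 1` then `Wv = λv ↔ W̃v = λv`. -/
theorem eigenspace_preservation {n : ℕ} (W Wt : Matrix (Fin n) (Fin n) ℂ)
    (c : ℝ) (hc : 0 < c) :
    (ComplexApprox c W Wt →
      (∀ v : Fin n → ℂ, W *ᵥ v = v → Wt *ᵥ v = v) ∧
      (c < 1 → ∀ v : Fin n → ℂ, W *ᵥ v = v ↔ Wt *ᵥ v = v)) ∧
    (UnitCircleApprox c W Wt →
      ∀ μ : ℂ, ‖μ‖ = 1 →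
        (∀ v : Fin n → ℂ, W *ᵥ v = μ • v → Wt *ᵥ v = μ • v) ∧
        (c < 1 → ∀ v : Fin n → ℂ, W *ᵥ v = μ • v ↔ Wt *ᵥ v = μ • v)) := by
  have hre : LipschitzWith 1 Complex.re := RCLike.lipschitzWith_re
  have hre_hom (r : ℝ) (a : ℂ) (_ : 0 ≤ r) : (r * a).re = r * a.re := Complex.re_ofReal_mul r a
  have hnorm_hom (r : ℝ) (a : ℂ) (hr : 0 ≤ r) : ‖(r : ℂ) * a‖ = r * ‖a‖ := by
    rw [norm_mul, Complex.norm_real, Real.norm_of_nonneg hr]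
  refine ⟨fun h => ?_, fun h μ hμ => ?_⟩
  · rw [complexApprox_iff_gapApprox] at h
    refine ⟨fun v hv => ?_, fun hc1 v => ?_⟩
    · simpa using h.mulVec_eq_smul_of_mulVec_eq_smul hre hre_hom Complex.one_re (v := v)
        (by simpa using hv)
    · simpa using h.mulVec_eq_smul_iff hre hre_hom Complex.one_re hc.le hc1 (v := v)
  · rw [unitCircleApprox_iff_gapApprox] at h
    exact ⟨fun v => h.mulVec_eq_smul_of_mulVec_eq_smul lipschitzWith_one_norm hnorm_hom hμ,
      fun hc1 v => h.mulVec_eq_smul_iff lipschitzWith_one_norm hnorm_hom hμ hc.le hc1⟩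

end
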